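/- Let K be a field of characteristic different from 2, and f ∈ K[[z]] with f(0)=0, f'(0)=1, and f(z) ≠ z. Then for every integer n ≥ 1 not divisible by the characteristic of K, the iterative residue satisfies resit(f^n) = (1/n)·resit(f). -/

import Mathlib

/-- Residue fixed point index: coefficient of 1/z in the Laurent expansion of 1/(z - f(z)). -/
noncomputable def ind {K : Type*} [Field K] (f : PowerSeries K) : K :=
  (((HahnSeries.ofPowerSeries ℤ K) (PowerSeries.X - f) : LaurentSeries K)⁻¹).coeff (-1)

/-- Composition of formal power series: `pcomp f g = f ∘ g` (valid when `g` has zero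
constant term). -/
noncomputable def pcomp {R : Type*} [CommRing R] (f g : PowerSeries R) : PowerSeries R :=
  PowerSeries.mk fun n =>
    ∑ k ∈ Finset.range (n + 1), PowerSeries.coeff k f * PowerSeries.coeff n (g ^ k)

/-- n-fold compositional iterate of a power series. -/
noncomputable def piter {R : Type*} [CommRing R] (f : PowerSeries R) : ℕ → PowerSeries R
  | 0 => PowerSeries.X
  | n + 1 => pcomp f (piter f n)

/-- The multiplicity of 0 as a fixed point: lowest degree of a nonzero term of f(z) - z. -/
noncomputable def multFix {K : Type*} [Field K] (f : PowerSeries K) : ℕ :=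
  (f - PowerSeries.X).order.toNat

/-- Écalle's iterative residue: resit(f) = mult(f)/2 - ind(f). -/
noncomputable def resit {K : Type*} [Field K] (f : PowerSeries K) : K :=
  (multFix f : K) / 2 - ind f

open PowerSeries Finset

section AuxGeneral

variable {R : Type*} [CommRing R]

lemma aux_coeff_mul_eq_zero {p q : PowerSeries R} {N M : ℕ}
    (hp : ∀ i < N, PowerSeries.coeff i p = 0) (hq : ∀ i < M, PowerSeries.coeff i q = 0) :
    ∀ j < N + M, PowerSeries.coeff j (p * q) = 0 := by
  intro j hj
  rw [PowerSeries.coeff_mul]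
  apply Finset.sum_eq_zero
  rintro ⟨i, l⟩ hil
  rw [Finset.HasAntidiagonal.mem_antidiagonal] at hil
  rcases lt_or_ge i N with h | h
  · rw [hp i h, zero_mul]
  · have : l < M := by omega
    rw [hq l this, mul_zero]

lemma aux_coeff_mul_congr {a b : PowerSeries R} (p : PowerSeries R) {N : ℕ}
    (h : ∀ i < N, PowerSeries.coeff i a = PowerSeries.coeff i b) :
    ∀ j < N, PowerSeries.coeff j (p * a) = PowerSeries.coeff j (p * b) := by
  intro j hj
  rw [PowerSeries.coeff_mul, PowerSeries.coeff_mul]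
  apply Finset.sum_congr rfl
  rintro ⟨i, l⟩ hil
  rw [Finset.HasAntidiagonal.mem_antidiagonal] at hil
  have : l < N := by omega
  rw [h l this]

lemma coeff_pcomp (f g : PowerSeries R) (n : ℕ) :
    PowerSeries.coeff n (pcomp f g) =
      ∑ k ∈ Finset.range (n + 1), PowerSeries.coeff k f * PowerSeries.coeff n (g ^ k) := by
  rw [pcomp, PowerSeries.coeff_mk]

lemma pcomp_add (f₁ f₂ g : PowerSeries R) :
    pcomp (f₁ + f₂) g = pcomp f₁ g + pcomp f₂ g := by
  ext n
  simp only [coeff_pcomp, map_add, add_mul, Finset.sum_add_distrib]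

lemma pcomp_X (g : PowerSeries R) (hg : PowerSeries.constantCoeff g = 0) :
    pcomp PowerSeries.X g = g := by
  ext n
  rw [coeff_pcomp]
  have : ∀ k ∈ Finset.range (n+1),
      PowerSeries.coeff k PowerSeries.X * PowerSeries.coeff n (g ^ k)
        = if k = 1 then PowerSeries.coeff n (g ^ k) else 0 := by
    intro k _
    rw [PowerSeries.coeff_X]
    split_ifs <;> simp
  rw [Finset.sum_congr rfl this, Finset.sum_ite_eq' (Finset.range (n+1)) 1]
  rcases Nat.eq_zero_or_pos n with rfl | hn
  · simp [PowerSeries.coeff_zero_eq_constantCoeff, hg]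
  · rw [if_pos (Finset.mem_range.mpr (by omega)), pow_one]

lemma constantCoeff_pcomp (f g : PowerSeries R) :
    PowerSeries.constantCoeff (pcomp f g) = PowerSeries.constantCoeff f := by
  have := coeff_pcomp f g 0
  simp only [Finset.range_one, Finset.sum_singleton, pow_zero, PowerSeries.coeff_zero_eq_constantCoeff] at this ⊢
  simpa using this

end AuxGeneral

section AuxKey

variable {R : Type*} [CommRing R]

lemma coeff_pow_key {m : ℕ} {g : PowerSeries R}
    (hgX : ∀ i < m, PowerSeries.coeff i (g - PowerSeries.X) = 0) :
    ∀ k : ℕ, ∀ n < 2*m, PowerSeries.coeff n (g ^ (k+1)) =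
      PowerSeries.coeff n ((PowerSeries.X : PowerSeries R) ^ (k+1))
      + (k+1 : R) * PowerSeries.coeff n
          ((PowerSeries.X : PowerSeries R) ^ k * (g - PowerSeries.X)) := by
  set E : PowerSeries R := g - PowerSeries.X with hE
  have hg : g = PowerSeries.X + E := by rw [hE]; ring
  have he2 : ∀ j < 2*m, PowerSeries.coeff j (E * E) = 0 := by
    intro j hj
    exact aux_coeff_mul_eq_zero hgX hgX j (by omega)
  intro k
  induction k with
  | zero =>
    intro n hn
    simp only [zero_add, pow_one, pow_zero, one_mul, Nat.cast_zero, zero_add]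
    rw [hg]
    simp
  | succ k ih =>
    intro n hn
    set b : PowerSeries R := (PowerSeries.X : PowerSeries R) ^ (k+1)
      + (k+1 : R) • ((PowerSeries.X : PowerSeries R) ^ k * E) with hb
    have hib : ∀ i < 2*m, PowerSeries.coeff i (g ^ (k+1)) = PowerSeries.coeff i b := by
      intro i hi
      rw [ih i hi, hb, map_add, PowerSeries.coeff_smul, smul_eq_mul]
    have step1 : g ^ (k+1+1) = PowerSeries.X * g^(k+1) + E * g^(k+1) := by
      rw [pow_succ, mul_comm (g^(k+1)) g]
      nth_rewrite 1 [hg]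
      ring
    rw [step1, map_add,
      aux_coeff_mul_congr PowerSeries.X hib n hn,
      aux_coeff_mul_congr E hib n hn, hb]
    have hXb : PowerSeries.X * ((PowerSeries.X : PowerSeries R) ^ (k+1)
        + (k+1 : R) • ((PowerSeries.X : PowerSeries R) ^ k * E))
        = (PowerSeries.X : PowerSeries R)^(k+2)
          + (k+1 : R) • ((PowerSeries.X : PowerSeries R) ^ (k+1) * E) := by
      rw [smul_eq_C_mul, smul_eq_C_mul]
      ring
    have hEb : E * ((PowerSeries.X : PowerSeries R) ^ (k+1)
        + (k+1 : R) • ((PowerSeries.X : PowerSeries R) ^ k * E))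
        = (PowerSeries.X : PowerSeries R)^(k+1) * E
          + (k+1 : R) • ((E * E) * (PowerSeries.X : PowerSeries R) ^ k) := by
      rw [smul_eq_C_mul, smul_eq_C_mul]
      ring
    rw [hXb, hEb, map_add, map_add, PowerSeries.coeff_smul, PowerSeries.coeff_smul,
      smul_eq_mul, smul_eq_mul]
    have hz : PowerSeries.coeff n ((E * E) * (PowerSeries.X : PowerSeries R) ^ k) = 0 := by
      refine aux_coeff_mul_eq_zero (N := 2*m) (M := 0) he2 (by omega) n (by omega)
    rw [hz]
    push_cast
    ring

end AuxKey

section AuxKey2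

variable {R : Type*} [CommRing R]

lemma coeff_pcomp_key {m : ℕ} {d g : PowerSeries R}
    (hd0 : PowerSeries.coeff 0 d = 0)
    (hg0 : PowerSeries.constantCoeff g = 0)
    (hgX : ∀ i < m, PowerSeries.coeff i (g - PowerSeries.X) = 0)
    {n : ℕ} (hn : n < 2*m) :
    PowerSeries.coeff n (pcomp d g) =
      PowerSeries.coeff n d
      + PowerSeries.coeff n (d⁄dX R d * (g - PowerSeries.X)) := by
  set E : PowerSeries R := g - PowerSeries.X with hE
  have hE0 : PowerSeries.coeff 0 E = 0 := by
    rw [hE, map_sub]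
    simp [hg0]
  rw [coeff_pcomp, Finset.sum_range_succ']
  have h00 : PowerSeries.coeff 0 d * PowerSeries.coeff n (g ^ 0) = 0 := by
    rw [hd0, zero_mul]
  rw [h00, add_zero]
  have hterm : ∀ j ∈ Finset.range n,
      PowerSeries.coeff (j+1) d * PowerSeries.coeff n (g ^ (j+1)) =
      PowerSeries.coeff (j+1) d * PowerSeries.coeff n ((PowerSeries.X : PowerSeries R)^(j+1))
      + PowerSeries.coeff (j+1) d * ((j+1:R) *
          PowerSeries.coeff n ((PowerSeries.X : PowerSeries R)^j * E)) := by
    intro j _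
    rw [coeff_pow_key hgX j n hn, mul_add]
  rw [Finset.sum_congr rfl hterm, Finset.sum_add_distrib]
  congr 1
  · -- first sum equals coeff n d
    rcases Nat.eq_zero_or_pos n with rfl | hpos
    · simp [hd0]
    · rw [Finset.sum_eq_single (n-1)]
      · have hsub : n - 1 + 1 = n := by omega
        rw [hsub, PowerSeries.coeff_X_pow, if_pos rfl, mul_one]
      · intro j hj hjn
        rw [PowerSeries.coeff_X_pow, if_neg (by rw [Finset.mem_range] at hj; omega), mul_zero]
      · intro hn'
        exact absurd (Finset.mem_range.mpr (by omega)) hn'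
  · -- second sum equals coeff n (d' * E)
    rw [PowerSeries.coeff_mul, Finset.Nat.sum_antidiagonal_eq_sum_range_succ_mk,
      Finset.sum_range_succ]
    have hlast : PowerSeries.coeff n (d⁄dX R d) * PowerSeries.coeff (n - n) E = 0 := by
      simp [hE0]
    rw [hlast, add_zero]
    apply Finset.sum_congr rfl
    intro j hj
    rw [Finset.mem_range] at hj
    rw [PowerSeries.coeff_derivative, PowerSeries.coeff_X_pow_mul' (p := E) (n := j) (d := n),
      if_pos (by omega)]
    push_cast
    ring

end AuxKey2

section AuxIter

variable {R : Type*} [CommRing R]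

lemma piter_key (f : PowerSeries R)
    (h0 : PowerSeries.constantCoeff f = 0) {m : ℕ} (hm : 2 ≤ m)
    (hord : ∀ i < m, PowerSeries.coeff i (f - PowerSeries.X) = 0) (k : ℕ) :
    PowerSeries.constantCoeff (piter f k) = 0 ∧
    ∀ j < 2*m, PowerSeries.coeff j (piter f k - PowerSeries.X) =
      PowerSeries.coeff j ((k:R) • (f - PowerSeries.X)
        + (k.choose 2 : R) • ((f - PowerSeries.X) * d⁄dX R (f - PowerSeries.X))) := by
  set D : PowerSeries R := f - PowerSeries.X with hD
  set D' : PowerSeries R := d⁄dX R D with hD'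
  have hd0 : PowerSeries.coeff 0 D = 0 := hord 0 (by omega)
  have hD'low : ∀ i < m - 1, PowerSeries.coeff i D' = 0 := by
    intro i hi
    rw [hD', PowerSeries.coeff_derivative, hord (i+1) (by omega), zero_mul]
  have hDD'low : ∀ i < 2*m - 1, PowerSeries.coeff i (D * D') = 0 := by
    intro i hi
    exact aux_coeff_mul_eq_zero hord hD'low i (by omega)
  induction k with
  | zero =>
    constructor
    · show PowerSeries.constantCoeff PowerSeries.X = 0
      simp
    · intro j hj
      show PowerSeries.coeff j (PowerSeries.X - PowerSeries.X) = _
      simp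
  | succ k ih =>
    obtain ⟨hgc, hgcoeff⟩ := ih
    set g : PowerSeries R := piter f k with hg
    have hpit : piter f (k+1) = pcomp f g := rfl
    have hgX : ∀ i < m, PowerSeries.coeff i (g - PowerSeries.X) = 0 := by
      intro i hi
      rw [hgcoeff i (by omega), map_add, PowerSeries.coeff_smul, PowerSeries.coeff_smul,
        hord i hi, aux_coeff_mul_eq_zero (N := m) (M := 0) hord (by omega) i (by omega)]
      simp
    have hpc : pcomp f g = g + pcomp D g := by
      have hf : f = PowerSeries.X + D := by rw [hD]; ring
      calc pcomp f g = pcomp (PowerSeries.X + D) g := by rw [← hf]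
        _ = pcomp PowerSeries.X g + pcomp D g := pcomp_add _ _ _
        _ = g + pcomp D g := by rw [pcomp_X g hgc]
    constructor
    · rw [hpit, constantCoeff_pcomp, h0]
    · intro j hj
      have key := coeff_pcomp_key (m := m) hd0 hgc hgX hj
      have : piter f (k+1) - PowerSeries.X = (g - PowerSeries.X) + pcomp D g := by
        rw [hpit, hpc]; ring
      rw [this, map_add, hgcoeff j hj, key,
        aux_coeff_mul_congr (d⁄dX R D) hgcoeff j hj]
      -- now: coeff j (D' * P_k) = (k:R) * coeff j (D*D')   (mod < 2m)
      have hsplit : d⁄dX R D * ((k:R) • D + (k.choose 2 : R) • (D * D'))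
          = (k:R) • (D * D') + (k.choose 2 : R) • (D' * (D * D')) := by
        rw [smul_eq_C_mul, smul_eq_C_mul, smul_eq_C_mul, smul_eq_C_mul, ← hD']
        ring
      have hz : PowerSeries.coeff j (D' * (D * D')) = 0 := by
        refine aux_coeff_mul_eq_zero (N := m - 1) (M := 2*m - 1) hD'low hDD'low j (by omega)
      have hc1 : ((k+1 : ℕ) : R) = (k : R) + 1 := by push_cast; ring
      have hc2 : (((k+1).choose 2 : ℕ) : R) = (k.choose 2 : R) + (k : R) := by
        rw [Nat.choose_succ_succ, Nat.choose_one_right]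
        push_cast
        ring
      simp only [hsplit, map_add, PowerSeries.coeff_smul, smul_eq_mul, hz, mul_zero,
        add_zero, hc1, hc2]
      ring

end AuxIter

section AuxLaurent

variable {K : Type*} [Field K]

lemma coeff_neg_one_inv {m : ℕ} (hm : 1 ≤ m) (Q Qi : PowerSeries K)
    (hQi : Q * Qi = 1) :
    (((HahnSeries.ofPowerSeries ℤ K) (PowerSeries.X ^ m * Q) : LaurentSeries K)⁻¹).coeff (-1)
      = PowerSeries.coeff (m-1) Qi := by
  have h1 : ((HahnSeries.ofPowerSeries ℤ K) (PowerSeries.X ^ m * Q) : LaurentSeries K) *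
      (HahnSeries.single (-(m:ℤ)) 1 * (HahnSeries.ofPowerSeries ℤ K) Qi) = 1 := by
    rw [map_mul, map_pow, HahnSeries.ofPowerSeries_X, HahnSeries.single_pow,
      mul_mul_mul_comm, HahnSeries.single_mul_single, ← map_mul, hQi, map_one, mul_one,
      one_pow]
    have hms : m • (1:ℤ) + -(m:ℤ) = 0 := by simp
    rw [hms, mul_one, HahnSeries.single_zero_one]
  rw [inv_eq_of_mul_eq_one_right h1]
  have hco : (-1 : ℤ) = ((m - 1 : ℕ) : ℤ) + (-(m:ℤ)) := by omega
  rw [hco, HahnSeries.coeff_single_mul_add, one_mul, HahnSeries.ofPowerSeries_apply_coeff]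

end AuxLaurent

theorem stmt15 {K : Type*} [Field K] (hchar : ringChar K ≠ 2)
    (f : PowerSeries K) (h0 : PowerSeries.constantCoeff f = 0)
    (h1 : PowerSeries.coeff 1 f = 1) (hfX : f ≠ PowerSeries.X)
    (n : ℕ) (hn : 1 ≤ n) (hnd : ¬ (ringChar K ∣ n)) :
    resit (piter f n) = (1 / (n : K)) * resit f := by
  classical
  have hn0 : (n : K) ≠ 0 := fun h => hnd ((ringChar.spec K n).mp h)
  have h2K : (2 : K) ≠ 0 := Ring.two_ne_zero hchar
  set D : PowerSeries K := f - PowerSeries.X with hD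
  set D' : PowerSeries K := d⁄dX K D with hD'
  have hDne : D ≠ 0 := sub_ne_zero.mpr hfX
  have hfin : D.order ≠ ⊤ := by
    rw [← lt_top_iff_ne_top]
    exact PowerSeries.order_finite_iff_ne_zero.mpr hDne
  set m : ℕ := multFix f with hmdef
  have hordm : D.order = (m : ℕ∞) := by
    rw [hmdef, multFix, ← hD, ENat.coe_toNat hfin]
  have hordle : (2 : ℕ∞) ≤ D.order := by
    have : ((2:ℕ) : ℕ∞) ≤ D.order := by
      apply PowerSeries.nat_le_order
      intro i hi
      interval_cases i
      · rw [hD, map_sub, PowerSeries.coeff_zero_eq_constantCoeff]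
        simp [h0]
      · rw [hD, map_sub, h1, PowerSeries.coeff_X]
        simp
    exact_mod_cast this
  have hm2 : 2 ≤ m := by
    rw [hordm] at hordle
    exact_mod_cast hordle
  have hm1 : 1 ≤ m := by omega
  have hord : ∀ i < m, PowerSeries.coeff i D = 0 := by
    intro i hi
    exact PowerSeries.coeff_of_lt_order i (by rw [hordm]; exact_mod_cast hi)
  have hmne : PowerSeries.coeff m D ≠ 0 := (PowerSeries.order_eq_nat.mp hordm).1
  -- factor D = X^m * U
  obtain ⟨U, hU⟩ := PowerSeries.X_pow_dvd_iff.mpr hord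
  have hu0 : PowerSeries.constantCoeff U = PowerSeries.coeff m D := by
    conv_rhs => rw [hU]
    have := PowerSeries.coeff_X_pow_mul U m 0
    rw [zero_add] at this
    rw [this, PowerSeries.coeff_zero_eq_constantCoeff]
  have hune : PowerSeries.constantCoeff U ≠ 0 := hu0 ▸ hmne
  obtain ⟨u, hu⟩ := PowerSeries.isUnit_iff_constantCoeff.mpr (isUnit_iff_ne_zero.mpr hune)
  set Ui : PowerSeries K := ↑u⁻¹ with hUidef
  have hUi : U * Ui = 1 := by rw [← hu, hUidef]; exact_mod_cast u.mul_inv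
  -- derivative facts
  have hD'0 : PowerSeries.coeff 0 D' = 0 := by
    rw [hD', PowerSeries.coeff_derivative, hord 1 (by omega), zero_mul]
  -- ind f
  have hXf : PowerSeries.X - f = PowerSeries.X ^ m * (-U) := by
    have : PowerSeries.X - f = -D := by rw [hD]; ring
    rw [this, hU]; ring
  have hindf : ind f = PowerSeries.coeff (m-1) (-Ui) := by
    rw [ind, hXf]
    exact coeff_neg_one_inv hm1 (-U) (-Ui) (by rw [neg_mul_neg, hUi])
  -- iterate
  obtain ⟨hconstn, hAco⟩ := piter_key f h0 hm2 hord n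
  set A : PowerSeries K := piter f n - PowerSeries.X with hA
  set c' : K := ((n : K) - 1) / 2 with hc'
  have hc2K : ((n.choose 2 : ℕ) : K) = (n : K) * c' := by
    have h2d : 2 ∣ n * (n - 1) := by
      obtain ⟨k, hk⟩ : ∃ k, n = k + 1 := ⟨n - 1, by omega⟩
      subst hk
      simpa [Nat.mul_comm] using (Nat.even_mul_succ_self k).two_dvd
    rw [Nat.choose_two_right, Nat.cast_div h2d h2K, Nat.cast_mul, Nat.cast_sub hn]
    rw [hc']
    push_cast
    ring
  set V : PowerSeries K := (n : K) • (1 : PowerSeries K) + ((n.choose 2 : ℕ) : K) • D' with hV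
  have hδV : ∀ j < 2*m, PowerSeries.coeff j A = PowerSeries.coeff j (D * V) := by
    intro j hj
    rw [hAco j hj]
    congr 1
    rw [hV, smul_eq_C_mul, smul_eq_C_mul, smul_eq_C_mul, smul_eq_C_mul]
    ring
  have hAlow : ∀ i < m, PowerSeries.coeff i A = 0 := by
    intro i hi
    rw [hδV i (by omega)]
    exact aux_coeff_mul_eq_zero (N := m) (M := 0) hord (by omega) i (by omega)
  obtain ⟨N, hN⟩ := PowerSeries.X_pow_dvd_iff.mpr hAlow
  have hDV : D * V = PowerSeries.X ^ m * (U * V) := by rw [hU]; ring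
  have hNdiff : ∀ i < m, PowerSeries.coeff i (U * V - N) = 0 := by
    intro i hi
    have h1' := hδV (i + m) (by omega)
    rw [hN, hDV, PowerSeries.coeff_X_pow_mul, PowerSeries.coeff_X_pow_mul] at h1'
    rw [map_sub, h1', sub_self]
  have hV0 : PowerSeries.constantCoeff V = (n : K) := by
    rw [← PowerSeries.coeff_zero_eq_constantCoeff, hV, map_add, PowerSeries.coeff_smul,
      PowerSeries.coeff_smul, hD'0]
    simp
  have hUV0 : PowerSeries.constantCoeff (U * V) ≠ 0 := by
    rw [map_mul, hV0]
    exact mul_ne_zero hune hn0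
  have hN0 : PowerSeries.constantCoeff N ≠ 0 := by
    have := hNdiff 0 (by omega)
    rw [map_sub, sub_eq_zero, PowerSeries.coeff_zero_eq_constantCoeff] at this
    rw [← this]
    exact hUV0
  obtain ⟨nu, hnu⟩ := PowerSeries.isUnit_iff_constantCoeff.mpr (isUnit_iff_ne_zero.mpr hN0)
  set Ni : PowerSeries K := ↑nu⁻¹ with hNidef
  have hNi : N * Ni = 1 := by rw [← hnu, hNidef]; exact_mod_cast nu.mul_inv
  -- multFix of the iterate
  have hAm : PowerSeries.coeff m A ≠ 0 := by
    rw [hδV m (by omega), hDV]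
    have := PowerSeries.coeff_X_pow_mul (U * V) m 0
    rw [zero_add] at this
    rw [this, PowerSeries.coeff_zero_eq_constantCoeff]
    exact hUV0
  have hmultn : multFix (piter f n) = m := by
    rw [multFix, ← hA]
    have : A.order = (m : ℕ∞) := PowerSeries.order_eq_nat.mpr ⟨hAm, hAlow⟩
    rw [this, ENat.toNat_coe]
  -- ind of the iterate
  have hXfn : PowerSeries.X - piter f n = PowerSeries.X ^ m * (-N) := by
    have : PowerSeries.X - piter f n = -A := by rw [hA]; ring
    rw [this, hN]; ring
  have hindfn : ind (piter f n) = PowerSeries.coeff (m-1) (-Ni) := by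
    rw [ind, hXfn]
    exact coeff_neg_one_inv hm1 (-N) (-Ni) (by rw [neg_mul_neg, hNi])
  -- the W series
  set W : PowerSeries K := (1 : PowerSeries K) + c' • D' with hW
  have hW0 : PowerSeries.constantCoeff W = 1 := by
    rw [← PowerSeries.coeff_zero_eq_constantCoeff, hW, map_add, PowerSeries.coeff_smul, hD'0]
    simp
  have hWunit : IsUnit W :=
    PowerSeries.isUnit_iff_constantCoeff.mpr (by rw [hW0]; exact isUnit_one)
  obtain ⟨w, hw⟩ := hWunit
  set Wi : PowerSeries K := ↑w⁻¹ with hWidef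
  have hWi : W * Wi = 1 := by rw [← hw, hWidef]; exact_mod_cast w.mul_inv
  have hWi0 : PowerSeries.constantCoeff Wi = 1 := by
    have := congrArg (PowerSeries.constantCoeff) hWi
    rw [map_mul, hW0, one_mul, map_one] at this
    exact this
  have hVW : V = (n : K) • W := by
    rw [hV, hW, smul_add, smul_smul, hc2K]
  set Vi : PowerSeries K := (n : K)⁻¹ • Wi with hVidef
  have hVVi : V * Vi = 1 := by
    rw [hVW, hVidef, smul_mul_smul_comm, mul_inv_cancel₀ hn0, hWi, one_smul]
  have hUVi : (U * V) * (Vi * Ui) = 1 := by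
    have : (U * V) * (Vi * Ui) = (U * Ui) * (V * Vi) := by ring
    rw [this, hUi, hVVi, mul_one]
  -- coeff (m-1) Ni = coeff (m-1) (Vi * Ui)
  have hNiVi : PowerSeries.coeff (m-1) Ni = PowerSeries.coeff (m-1) (Vi * Ui) := by
    have hiden : Ni - Vi * Ui = (U * V - N) * (Ni * (Vi * Ui)) := by
      have : (U * V - N) * (Ni * (Vi * Ui))
          = ((U * V) * (Vi * Ui)) * Ni - (N * Ni) * (Vi * Ui) := by ring
      rw [this, hUVi, hNi, one_mul, one_mul]
    have : PowerSeries.coeff (m-1) (Ni - Vi * Ui) = 0 := by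
      rw [hiden]
      exact aux_coeff_mul_eq_zero (N := m) (M := 0) hNdiff (by omega) (m-1) (by omega)
    rw [map_sub, sub_eq_zero] at this
    exact this
  -- derivative decomposition
  have hderiv : D' = PowerSeries.X ^ m * (d⁄dX K U) + (m : K) • (PowerSeries.X ^ (m-1) * U) := by
    rw [hD', hU, Derivation.leibniz]
    have hXm : d⁄dX K ((PowerSeries.X : PowerSeries K) ^ m)
        = m • ((PowerSeries.X : PowerSeries K) ^ (m-1) • (1 : PowerSeries K)) := by
      rw [Derivation.leibniz_pow, PowerSeries.derivative_X]
    rw [hXm]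
    have hms : m • ((PowerSeries.X : PowerSeries K) ^ (m-1) • (1 : PowerSeries K))
        = PowerSeries.C (m : K) * PowerSeries.X ^ (m-1) := by
      rw [smul_eq_mul, mul_one, nsmul_eq_mul, map_natCast]
    rw [smul_eq_mul, smul_eq_mul, hms, smul_eq_C_mul]
    ring
  -- coeff (m-1) (D' * (Wi * Ui)) = m
  have hkey : PowerSeries.coeff (m-1) (D' * (Wi * Ui)) = (m : K) := by
    have hsplit : D' * (Wi * Ui) = PowerSeries.X ^ m * (d⁄dX K U * Wi * Ui)
        + (m : K) • (PowerSeries.X ^ (m-1) * Wi) * (U * Ui) := by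
      rw [hderiv, smul_eq_C_mul, smul_eq_C_mul]
      ring
    rw [hsplit, hUi, mul_one, map_add, PowerSeries.coeff_X_pow_mul', if_neg (by omega),
      PowerSeries.coeff_smul, smul_eq_mul]
    have := PowerSeries.coeff_X_pow_mul Wi (m-1) 0
    rw [zero_add] at this
    rw [this, PowerSeries.coeff_zero_eq_constantCoeff, hWi0, mul_one, zero_add]
  -- coeff (m-1) (Wi * Ui)
  have hWiUi : PowerSeries.coeff (m-1) (Wi * Ui)
      = PowerSeries.coeff (m-1) Ui - c' * (m : K) := by
    have hWieq : Wi = 1 - c' • (D' * Wi) := by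
      have h' := hWi
      rw [hW, add_mul, one_mul, smul_mul_assoc] at h'
      rw [eq_sub_iff_add_eq]
      exact h'
    have : Wi * Ui = Ui - c' • (D' * (Wi * Ui)) := by
      conv_lhs => rw [hWieq]
      rw [sub_mul, one_mul, smul_mul_assoc, mul_assoc]
    rw [this, map_sub, PowerSeries.coeff_smul, smul_eq_mul, hkey]
  -- put together the index formula
  have hindA : ind (piter f n) = (n : K)⁻¹ * (ind f + c' * (m : K)) := by
    rw [hindfn, hindf]
    rw [map_neg, map_neg, hNiVi, hVidef, smul_mul_assoc, PowerSeries.coeff_smul, smul_eq_mul,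
      hWiUi]
    ring
  -- final arithmetic
  rw [resit, resit, hmultn, hindA, hindf, hmdef, map_neg, hc']
  field_simp
  ring
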